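/- Let θ be a partial action of an inverse semigroupoid S on X and let ≈ be the equivalence relation on D = {(s,x) : x ∈ X_{s*s}} generated by the relation ∼. If (s,x) ≈ (t,y), then x ∈ X_{s*} if and only if y ∈ X_{t*}; and when both memberships hold, θ_s(x) = θ_t(y). -/

import Mathlib

structure InvSgpd (S : Type*) (O : Type*) where
  d : S → O
  c : S → O
  mul : S → S → S
  d_mul : ∀ s t, d s = c t → d (mul s t) = d t
  c_mul : ∀ s t, d s = c t → c (mul s t) = c s
  assoc : ∀ p s t, d p = c s → d s = c t → mul (mul p s) t = mul p (mul s t)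
  inv : S → S
  comp_inv : ∀ s, d s = c (inv s)
  inv_comp : ∀ s, d (inv s) = c s
  mul_inv_mul : ∀ s, mul (mul s (inv s)) s = s
  inv_mul_inv : ∀ s, mul (mul (inv s) s) (inv s) = inv s
  inv_unique : ∀ s t, d s = c t → d t = c s →
    mul (mul s t) s = s → mul (mul t s) t = t → t = inv s

namespace InvSgpd
variable {S O : Type*} (G : InvSgpd S O)
def Composable (s t : S) : Prop := G.d s = G.c t
def Idem (e : S) : Prop := G.Composable e e ∧ G.mul e e = e
def le (s t : S) : Prop :=
  G.d s = G.d t ∧ G.c s = G.c t ∧ s = G.mul t (G.mul (G.inv s) s)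
end InvSgpd

/-- A partial action of an inverse semigroupoid `G` on a set (type) `X`:
`dom s` plays the role of `X_s` and `act s` the role of `θ_s : X_{s*} → X_s`
(as a total map whose values are only relevant on `dom (G.inv s)`). -/
structure PAction {S O : Type*} (G : InvSgpd S O) (X : Type*) where
  dom : S → Set X
  act : S → X → X
  maps : ∀ s, ∀ x ∈ dom (G.inv s), act s x ∈ dom s
  /-- (P1) `θ_e = id_{X_e}` for idempotents. -/
  idem_id : ∀ e, G.Idem e → ∀ x ∈ dom e, act e x = x
  /-- (P1) every point lies in some `X_e` with `e` idempotent. -/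
  cover : ∀ x : X, ∃ e, G.Idem e ∧ x ∈ dom e
  /-- (P2) `X_s ⊆ X_{ss*}`. -/
  dom_mono : ∀ s, dom s ⊆ dom (G.mul s (G.inv s))
  /-- (P3) `θ_t⁻¹(X_t ∩ X_{s*}) = X_{(st)*} ∩ X_{t*}` for composable `(s,t)`. -/
  preimage_eq : ∀ s t, G.Composable s t →
    {x | x ∈ dom (G.inv t) ∧ act t x ∈ dom t ∩ dom (G.inv s)}
      = dom (G.inv (G.mul s t)) ∩ dom (G.inv t)
  /-- (P3) `θ_s (θ_t x) = θ_{st} x` on `X_{(st)*} ∩ X_{t*}`. -/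
  mul_act : ∀ s t, G.Composable s t →
    ∀ x ∈ dom (G.inv (G.mul s t)) ∩ dom (G.inv t),
      act s (act t x) = act (G.mul s t) x

namespace PAction
variable {S O X : Type*} {G : InvSgpd S O}

/-- A partial action is global when `X_s = X_{ss*}` for every `s`. -/
def IsGlobal (θ : PAction G X) : Prop := ∀ s, θ.dom s = θ.dom (G.mul s (G.inv s))

end PAction

namespace PAction
variable {S O X : Type*} {G : InvSgpd S O} (θ : PAction G X)

/-- The set `D = {(s,x) ∈ S × X : x ∈ X_{s*s}}`. -/
def Dset : Type _ := {p : S × X // p.2 ∈ θ.dom (G.mul (G.inv p.1) p.1)}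

/-- The relation `∼` on `D`: `(s,x) ∼ (t,y)` iff
(R1) `(t*,s)` is composable, `x ∈ X_{s*t}` and `θ_{t*s}(x) = y`, or
(R2) `s` and `t` are idempotents and `x = y`. -/
def rel (p q : θ.Dset) : Prop :=
  (G.Composable (G.inv q.1.1) p.1.1 ∧
      p.1.2 ∈ θ.dom (G.mul (G.inv p.1.1) q.1.1) ∧
      θ.act (G.mul (G.inv q.1.1) p.1.1) p.1.2 = q.1.2) ∨
    (G.Idem p.1.1 ∧ G.Idem q.1.1 ∧ p.1.2 = q.1.2)

end PAction

/-!
Adjoining a zero that absorbs the non-composable products turns the inverse semigroupoid into an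
inverse semigroup. There idempotents commute, hence `(st)* = t*s*`, and in particular
`(t*s)* = s*t`. Axiom (P3) for the pair `(t*, s)` then shows that a step `(s,x) ∼ (t,y)` with
`x ∈ X_{s*}` gives `y = θ_{t*}(θ_s x) ∈ X_{t*}` and `θ_t y = θ_s x`. As `∼` is symmetric, the
partial value `θ_s(x)` of `(s,x) ∈ D` is constant along `∼`, hence on the classes of `≈`.
-/
structure IsInverseSemigroupInv {M : Type*} [Semigroup M] (i : M → M) : Prop where
  mul_inv_mul : ∀ a, a * i a * a = a
  inv_mul_inv : ∀ a, i a * a * i a = i a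
  eq_inv : ∀ a b, a * b * a = a → b * a * b = b → b = i a

namespace IsInverseSemigroupInv
variable {M : Type*} [Semigroup M] {i : M → M}

theorem inv_eq_self (hi : IsInverseSemigroupInv i) {e : M} (he : IsIdempotentElem e) : i e = e :=
  (hi.eq_inv e e (by rw [he.eq, he.eq]) (by rw [he.eq, he.eq])).symm

theorem isIdempotentElem_mul_inv (hi : IsInverseSemigroupInv i) (a : M) :
    IsIdempotentElem (a * i a) := by
  rw [IsIdempotentElem, ← mul_assoc, hi.mul_inv_mul]

theorem isIdempotentElem_inv_mul (hi : IsInverseSemigroupInv i) (a : M) :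
    IsIdempotentElem (i a * a) := by
  rw [IsIdempotentElem, ← mul_assoc, hi.inv_mul_inv]

theorem isIdempotentElem_mul (hi : IsInverseSemigroupInv i) {e f : M} (he : IsIdempotentElem e)
    (hf : IsIdempotentElem f) : IsIdempotentElem (e * f) := by
  set x := i (e * f)
  have hee : ∀ z, e * (e * z) = e * z := fun z => by rw [← mul_assoc, he.eq]
  have hff : ∀ z, f * (f * z) = f * z := fun z => by rw [← mul_assoc, hf.eq]
  have hx : ∀ z, x * (e * (f * (x * z))) = x * z := fun z => by
    simpa only [mul_assoc] using congrArg (· * z) (hi.inv_mul_inv (e * f))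
  -- `f * x * e` is an inverse of `e * f`, hence equal to `x`; this makes `x` idempotent, and then
  -- `e * f`, an inverse of the idempotent `x`, equals `x`.
  have hfxe : f * x * e = x := hi.eq_inv (e * f) (f * x * e)
    (by simpa only [mul_assoc, hee, hff] using hi.mul_inv_mul (e * f))
    (by simp only [mul_assoc, hee, hff, hx])
  have hxx : IsIdempotentElem x := by
    rw [IsIdempotentElem, ← hfxe]; simp only [mul_assoc, hx]
  have hefx : e * f = x := by
    rw [hi.eq_inv x (e * f) (hi.inv_mul_inv _) (hi.mul_inv_mul _), hi.inv_eq_self hxx]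
  rw [hefx]; exact hxx

theorem commute_of_isIdempotentElem (hi : IsInverseSemigroupInv i) {e f : M}
    (he : IsIdempotentElem e) (hf : IsIdempotentElem f) : Commute e f := by
  have hef := hi.isIdempotentElem_mul he hf
  have hfe := hi.isIdempotentElem_mul hf he
  have hee : ∀ z, e * (e * z) = e * z := fun z => by rw [← mul_assoc, he.eq]
  have hff : ∀ z, f * (f * z) = f * z := fun z => by rw [← mul_assoc, hf.eq]
  have hinv : f * e = i (e * f) := hi.eq_inv (e * f) (f * e)
    (by simpa only [mul_assoc, hee, hff] using hef.eq)
    (by simpa only [mul_assoc, hee, hff] using hfe.eq)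
  exact (hinv.trans (hi.inv_eq_self hef)).symm

theorem inv_mul (hi : IsInverseSemigroupInv i) (a b : M) : i (a * b) = i b * i a := by
  have hcomm := hi.commute_of_isIdempotentElem (hi.isIdempotentElem_mul_inv b)
    (hi.isIdempotentElem_inv_mul a)
  refine (hi.eq_inv (a * b) (i b * i a) ?_ ?_).symm
  · calc a * b * (i b * i a) * (a * b) = a * (b * i b * (i a * a)) * b := by simp only [mul_assoc]
      _ = a * i a * a * (b * i b * b) := by rw [hcomm.eq]; simp only [mul_assoc]
      _ = a * b := by rw [hi.mul_inv_mul, hi.mul_inv_mul]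
  · calc i b * i a * (a * b) * (i b * i a) = i b * (i a * a * (b * i b)) * i a := by
          simp only [mul_assoc]
      _ = i b * b * i b * (i a * a * i a) := by rw [← hcomm.eq]; simp only [mul_assoc]
      _ = i b * i a := by rw [hi.inv_mul_inv, hi.inv_mul_inv]

end IsInverseSemigroupInv

namespace InvSgpd
variable {S O : Type*} {G : InvSgpd S O}

theorem inv_inv (s : S) : G.inv (G.inv s) = s :=
  (G.inv_unique (G.inv s) s (G.inv_comp s) (G.comp_inv s)
    (G.inv_mul_inv s) (G.mul_inv_mul s)).symm

theorem inv_eq_self_of_idem {e : S} (he : G.Idem e) : G.inv e = e :=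
  (G.inv_unique e e he.1 he.1 (by rw [he.2, he.2]) (by rw [he.2, he.2])).symm

theorem idem_inv_mul (s : S) : G.Idem (G.mul (G.inv s) s) := by
  have hc : G.c (G.mul (G.inv s) s) = G.d s :=
    (G.c_mul _ _ (G.inv_comp s)).trans (G.comp_inv s).symm
  refine ⟨(G.d_mul _ _ (G.inv_comp s)).trans hc.symm, ?_⟩
  rw [G.assoc (G.inv s) s _ (G.inv_comp s) hc.symm,
    ← G.assoc s (G.inv s) s (G.comp_inv s) (G.inv_comp s), G.mul_inv_mul]

/-- `S` with a zero adjoined, absorbing the products of non-composable arrows. -/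
def ZeroExt (_G : InvSgpd S O) : Type _ := Option S

namespace ZeroExt

def of (s : S) : G.ZeroExt := some s

instance : Zero G.ZeroExt := ⟨(none : Option S)⟩

@[elab_as_elim, induction_eliminator]
theorem recZeroOf {motive : G.ZeroExt → Prop} (zero : motive 0) (of : ∀ s, motive (of s)) :
    ∀ a, motive a
  | none => zero
  | some s => of s

open scoped Classical in
noncomputable instance : Mul G.ZeroExt where
  mul
    | some a, some b => if G.d a = G.c b then of (G.mul a b) else 0
    | _, _ => 0

theorem of_mul_of {a b : S} (h : G.d a = G.c b) : (of a : G.ZeroExt) * of b = of (G.mul a b) :=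
  if_pos h

theorem of_mul_of_eq_zero {a b : S} (h : G.d a ≠ G.c b) : (of a : G.ZeroExt) * of b = 0 :=
  if_neg h

protected theorem zero_mul (a : G.ZeroExt) : 0 * a = 0 := rfl

protected theorem mul_zero (a : G.ZeroExt) : a * 0 = 0 := by
  induction a <;> rfl

protected theorem mul_assoc (a b c : G.ZeroExt) : a * b * c = a * (b * c) := by
  induction a with
  | zero => rfl
  | of a =>
  induction b with
  | zero => simp only [ZeroExt.zero_mul, ZeroExt.mul_zero]
  | of b =>
  induction c with
  | zero => simp only [ZeroExt.mul_zero]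
  | of c =>
  by_cases hab : G.d a = G.c b <;> by_cases hbc : G.d b = G.c c
  · rw [of_mul_of hab, of_mul_of hbc, of_mul_of ((G.d_mul a b hab).trans hbc),
      of_mul_of (hab.trans (G.c_mul b c hbc).symm), G.assoc a b c hab hbc]
  · rw [of_mul_of hab, of_mul_of_eq_zero hbc, ZeroExt.mul_zero,
      of_mul_of_eq_zero (by rwa [G.d_mul a b hab])]
  · rw [of_mul_of_eq_zero hab, ZeroExt.zero_mul, of_mul_of hbc,
      of_mul_of_eq_zero (by rwa [G.c_mul b c hbc])]
  · rw [of_mul_of_eq_zero hab, of_mul_of_eq_zero hbc, ZeroExt.zero_mul, ZeroExt.mul_zero]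

noncomputable instance : SemigroupWithZero G.ZeroExt where
  mul_assoc := ZeroExt.mul_assoc
  zero_mul := ZeroExt.zero_mul
  mul_zero := ZeroExt.mul_zero

def inv : G.ZeroExt → G.ZeroExt
  | none => 0
  | some s => of (G.inv s)

theorem inv_of (s : S) : inv (of s : G.ZeroExt) = of (G.inv s) := rfl

theorem of_injective : Function.Injective (of : S → G.ZeroExt) := Option.some_injective S

theorem of_ne_zero (s : S) : (of s : G.ZeroExt) ≠ 0 := Option.some_ne_none s

theorem composable_of_mul_ne_zero {a b : S} (h : (of a : G.ZeroExt) * of b ≠ 0) :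
    G.d a = G.c b :=
  not_not.mp fun hab => h (of_mul_of_eq_zero hab)

theorem of_mul_of_eq_of {a b x : S} (h : (of a : G.ZeroExt) * of b = of x) :
    G.d a = G.c b ∧ G.mul a b = x := by
  have hab : G.d a = G.c b := composable_of_mul_ne_zero (h ▸ of_ne_zero x)
  rw [of_mul_of hab] at h
  exact ⟨hab, of_injective h⟩

theorem isInverseSemigroupInv_inv : IsInverseSemigroupInv (inv : G.ZeroExt → G.ZeroExt) where
  mul_inv_mul a := by
    induction a with
    | zero => rfl
    | of s =>
      rw [inv_of, of_mul_of (G.comp_inv s),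
        of_mul_of ((G.d_mul _ _ (G.comp_inv s)).trans (G.inv_comp s)), G.mul_inv_mul]
  inv_mul_inv a := by
    induction a with
    | zero => rfl
    | of s =>
      rw [inv_of, of_mul_of (G.inv_comp s),
        of_mul_of ((G.d_mul _ _ (G.inv_comp s)).trans (G.comp_inv s)), G.inv_mul_inv]
  eq_inv a b hab hba := by
    induction a with
    | zero => exact hba.symm.trans (by rw [mul_zero, zero_mul]; rfl)
    | of s =>
    induction b with
    | zero => exact absurd hab (of_ne_zero s).symm
    | of t =>
    have hst : G.d s = G.c t := composable_of_mul_ne_zero fun h0 => of_ne_zero s (by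
      rw [← hab, h0, zero_mul])
    rw [of_mul_of hst] at hab
    obtain ⟨hts, hab⟩ := of_mul_of_eq_of hab
    rw [G.d_mul s t hst] at hts
    rw [of_mul_of hts] at hba
    obtain ⟨-, hba⟩ := of_mul_of_eq_of hba
    exact congrArg of (G.inv_unique s t hst hts hab hba)

end ZeroExt

theorem inv_mul {s t : S} (h : G.d s = G.c t) :
    G.inv (G.mul s t) = G.mul (G.inv t) (G.inv s) := by
  have key := ZeroExt.isInverseSemigroupInv_inv.inv_mul (ZeroExt.of s : G.ZeroExt) (ZeroExt.of t)
  rw [ZeroExt.of_mul_of h, ZeroExt.inv_of, ZeroExt.inv_of, ZeroExt.inv_of,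
    ZeroExt.of_mul_of ((G.inv_comp t).trans (h.symm.trans (G.comp_inv s)))] at key
  exact ZeroExt.of_injective key

end InvSgpd

namespace PAction
variable {S O X : Type*} {G : InvSgpd S O} (θ : PAction G X)

theorem act_inv_act {s : S} {x : X} (hx : x ∈ θ.dom (G.inv s)) :
    θ.act (G.inv s) (θ.act s x) = x := by
  have hidem := G.idem_inv_mul s
  have hx' : x ∈ θ.dom (G.mul (G.inv s) s) := by
    simpa only [G.inv_inv] using θ.dom_mono (G.inv s) hx
  rw [θ.mul_act (G.inv s) s (G.inv_comp s) x ⟨(G.inv_eq_self_of_idem hidem).symm ▸ hx', hx⟩]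
  exact θ.idem_id _ hidem x hx'

theorem act_act_inv {s : S} {x : X} (hx : x ∈ θ.dom s) :
    θ.act s (θ.act (G.inv s) x) = x := by
  simpa only [G.inv_inv] using θ.act_inv_act (s := G.inv s) (by rwa [G.inv_inv])

theorem mem_dom_of_idem {p : θ.Dset} (he : G.Idem p.1.1) : p.1.2 ∈ θ.dom p.1.1 := by
  simpa only [G.inv_eq_self_of_idem he, he.2] using p.2

theorem rel_symm {p q : θ.Dset} (h : θ.rel p q) : θ.rel q p := by
  rcases h with ⟨hc, hx, hxy⟩ | ⟨hp, hq, hxy⟩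
  · have hinv : G.inv (G.mul (G.inv q.1.1) p.1.1) = G.mul (G.inv p.1.1) q.1.1 := by
      rw [G.inv_mul hc, G.inv_inv]
    rw [← hinv] at hx
    refine Or.inl ⟨(G.inv_comp p.1.1).trans ((G.inv_comp q.1.1).symm.trans hc).symm, ?_, ?_⟩
    · rw [← hxy]
      exact θ.maps _ _ hx
    · rw [← hxy, ← hinv]
      exact θ.act_inv_act hx
  · exact Or.inr ⟨hq, hp, hxy.symm⟩

theorem mem_dom_inv_and_act_eq_of_rel {p q : θ.Dset} (h : θ.rel p q)
    (hp : p.1.2 ∈ θ.dom (G.inv p.1.1)) :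
    q.1.2 ∈ θ.dom (G.inv q.1.1) ∧ θ.act p.1.1 p.1.2 = θ.act q.1.1 q.1.2 := by
  rcases h with ⟨hc, hx, hxy⟩ | ⟨he, hf, hxy⟩
  · have hx' : p.1.2 ∈ θ.dom (G.inv (G.mul (G.inv q.1.1) p.1.1)) := by
      rwa [G.inv_mul hc, G.inv_inv]
    obtain ⟨-, -, hsx⟩ := (Set.ext_iff.mp (θ.preimage_eq _ _ hc) p.1.2).mpr ⟨hx', hp⟩
    rw [G.inv_inv] at hsx
    rw [← θ.mul_act _ _ hc _ ⟨hx', hp⟩] at hxy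
    rw [← hxy]
    exact ⟨θ.maps _ _ (by rwa [G.inv_inv]), (θ.act_act_inv hsx).symm⟩
  · refine ⟨?_, ?_⟩
    · rw [G.inv_eq_self_of_idem hf]
      exact θ.mem_dom_of_idem hf
    · rw [θ.idem_id _ he _ (θ.mem_dom_of_idem he),
        θ.idem_id _ hf _ (θ.mem_dom_of_idem hf), hxy]

def actPart (p : θ.Dset) : Part X :=
  ⟨p.1.2 ∈ θ.dom (G.inv p.1.1), fun _ => θ.act p.1.1 p.1.2⟩

theorem actPart_eq_of_rel {p q : θ.Dset} (h : θ.rel p q) : θ.actPart p = θ.actPart q :=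
  Part.ext' ⟨fun hp => (θ.mem_dom_inv_and_act_eq_of_rel h hp).1,
      fun hq => (θ.mem_dom_inv_and_act_eq_of_rel (θ.rel_symm h) hq).1⟩
    fun hp _ => (θ.mem_dom_inv_and_act_eq_of_rel h hp).2

end PAction

/-- If `(s,x) ≈ (t,y)` (the equivalence generated by `∼`), then
`x ∈ X_{s*}` iff `y ∈ X_{t*}`, and in that case `θ_s(x) = θ_t(y)`. -/
theorem eqvGen_act_eq {S O X : Type*} (G : InvSgpd S O) (θ : PAction G X)
    (p q : θ.Dset) (h : Relation.EqvGen θ.rel p q) :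
    (p.1.2 ∈ θ.dom (G.inv p.1.1) ↔ q.1.2 ∈ θ.dom (G.inv q.1.1)) ∧
      (p.1.2 ∈ θ.dom (G.inv p.1.1) → q.1.2 ∈ θ.dom (G.inv q.1.1) →
        θ.act p.1.1 p.1.2 = θ.act q.1.1 q.1.2) := by
  have key : θ.actPart p = θ.actPart q :=
    congrArg (Quot.lift θ.actPart fun _ _ => θ.actPart_eq_of_rel) (Quot.eqvGen_sound h)
  exact ⟨Iff.of_eq (congrArg Part.Dom key), fun hp _ => Part.get_eq_get_of_eq _ hp key⟩
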